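/- arXiv:2601.08051 — 2 statements merged into one kernel-verified Lean document; each statement's English description precedes it below -/
import Mathlib

section
/- Let ω_N = exp(2πi/N), z_j = R φ ω_N^{j-1} + O, and ω_j = ω_N^{j-1} R φ / N for j = 1,…,N, where O ∈ ℂ, R > 0, and |φ| = 1. Then for every z ∈ ℂ with z ∉ {z₁,…,z_N}, the partial fraction identity ∑_{j=1}^N ω_j/(z_j - z) = (1 - ((z - O)/(Rφ))^N)⁻¹ holds. -/
open Complex

/-! With `w = (z - O) / (Rφ)` the `j`-th term is `ζ^j / (ζ^j - w) / N`, and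
`ζ^j / (ζ^j - w) = 1 - w / (w - ζ^j)` turns the sum into `N` minus `w` times the logarithmic
derivative `N w^(N-1) / (w^N - 1)` of `X^N - 1 = ∏ j, (X - ζ^j)` at `w`. -/

namespace IsPrimitiveRoot

variable {K : Type*} [Field K] {N : ℕ} {ζ w : K}

theorem sum_one_div_sub_pow (hζ : IsPrimitiveRoot ζ N) (hw : w ^ N ≠ 1) :
    ∑ j ∈ Finset.range N, 1 / (w - ζ ^ j) = N * w ^ (N - 1) / (w ^ N - 1) := by
  have key := (Polynomial.X_pow_sub_one_splits hζ).eval_derivative_div_eval_of_ne_zero (x := w)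
    (by simpa [sub_eq_zero] using hw)
  rw [← Polynomial.nthRoots, hζ.nthRoots_eq (one_pow N)] at key
  simpa [Polynomial.derivative_X_pow, Finset.sum] using key.symm

theorem sum_pow_div_pow_sub (hζ : IsPrimitiveRoot ζ N) (hw : w ^ N ≠ 1) :
    ∑ j ∈ Finset.range N, ζ ^ j / (ζ ^ j - w) = N / (1 - w ^ N) := by
  have hN : N ≠ 0 := by rintro rfl; exact hw (pow_zero w)
  have hterm : ∀ j ∈ Finset.range N, ζ ^ j / (ζ ^ j - w) = 1 - w * (1 / (w - ζ ^ j)) := by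
    intro j _
    have hne : ζ ^ j ≠ w := fun h =>
      hw (by rw [← h, ← pow_mul, mul_comm, pow_mul, hζ.pow_eq_one, one_pow])
    have : ζ ^ j - w ≠ 0 := sub_ne_zero.2 hne
    have : w - ζ ^ j ≠ 0 := sub_ne_zero.2 hne.symm
    field_simp
    ring
  have h1 : w ^ N - 1 ≠ 0 := sub_ne_zero.2 hw
  have h2 : 1 - w ^ N ≠ 0 := fun h => h1 (by linear_combination -h)
  calc ∑ j ∈ Finset.range N, ζ ^ j / (ζ ^ j - w)
      = N - w * ∑ j ∈ Finset.range N, 1 / (w - ζ ^ j) := by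
        simp [Finset.sum_congr rfl hterm, Finset.sum_sub_distrib, Finset.mul_sum]
    _ = N - N * w ^ N / (w ^ N - 1) := by
        rw [hζ.sum_one_div_sub_pow hw, ← mul_pow_sub_one hN w]
        ring
    _ = N / (1 - w ^ N) := by
        field_simp
        ring

end IsPrimitiveRoot

/-- Partial fraction identity for the FEAST/Butterworth rational filter:
with `ω_N = exp(2πi/N)`, poles `z_j = Rφ ω_N^j + O` and weights `ω_j = ω_N^j Rφ / N`,
one has `∑ j, ω_j/(z_j - z) = (1 - ((z-O)/(Rφ))^N)⁻¹` away from the poles. -/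
theorem stmt_11 (N : ℕ) (hN : 1 ≤ N) (O : ℂ) (R : ℝ) (hR : 0 < R)
    (φ : ℂ) (hφ : ‖φ‖ = 1) (z : ℂ)
    (hz : ∀ j : Fin N,
      z ≠ (R : ℂ) * φ * Complex.exp (2 * Real.pi * I / N) ^ (j : ℕ) + O) :
    (∑ j : Fin N,
        (Complex.exp (2 * Real.pi * I / N) ^ (j : ℕ) * (R : ℂ) * φ / N) /
          (((R : ℂ) * φ * Complex.exp (2 * Real.pi * I / N) ^ (j : ℕ) + O) - z))
      = (1 - ((z - O) / ((R : ℂ) * φ)) ^ N)⁻¹ := by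
  have hN0 : N ≠ 0 := Nat.one_le_iff_ne_zero.1 hN
  have : NeZero N := ⟨hN0⟩
  set ζ := Complex.exp (2 * Real.pi * I / N)
  set c := (R : ℂ) * φ
  have hζ : IsPrimitiveRoot ζ N := Complex.isPrimitiveRoot_exp N hN0
  have hc : c ≠ 0 := mul_ne_zero (ofReal_ne_zero.2 hR.ne') (norm_ne_zero_iff.1 (by simp [hφ]))
  obtain ⟨w, hw_def⟩ : ∃ w, w = (z - O) / c := ⟨_, rfl⟩
  have hcw : c * w = z - O := by rw [hw_def, mul_div_cancel₀ _ hc]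
  have hw : w ^ N ≠ 1 := by
    intro h
    obtain ⟨j, hj, hζw⟩ := hζ.eq_pow_of_pow_eq_one h
    exact hz ⟨j, hj⟩ (by rw [hζw]; linear_combination -hcw)
  rw [← hw_def]
  calc _ = (∑ j ∈ Finset.range N, ζ ^ j / (ζ ^ j - w)) / N := by
        rw [Finset.sum_div, ← Fin.sum_univ_eq_sum_range]
        refine Finset.sum_congr rfl fun j _ => ?_
        rw [show c * ζ ^ (j : ℕ) + O - z = c * (ζ ^ (j : ℕ) - w) by
          linear_combination hcw]
        field_simp
        simp only [c, mul_assoc]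
    _ = (1 - w ^ N)⁻¹ := by
        rw [hζ.sum_pow_div_pow_sub hw, div_div_cancel_left' (Nat.cast_ne_zero.2 hN0)]
end

section
/- Let V be a Hilbert space and E, F finite-dimensional subspaces with dim E = dim F. If δ(F, E) := sup over unit f ∈ F of dist(f, E) is strictly less than 1, then δ(E, F) = δ(F, E), i.e., the gap between E and F equals δ(F, E). -/
/-!
If `δ(F, E) < 1`, no nonzero `f ∈ F` is orthogonal to `E`, so `Q_E : F → E` is injective and,
as `dim E = dim F`, onto. Writing `e = Q_E f`, we have `⟪Q_F e, f⟫ = ⟪e, f⟫ = ‖e‖²`, hence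
`‖Q_F e‖ ‖f‖ ≥ ‖e‖²`, while Pythagoras gives `‖e‖² ≥ (1 - δ(F, E)²) ‖f‖²`. Together
`‖Q_F e‖² ≥ (1 - δ(F, E)²) ‖e‖²`, i.e. `‖e - Q_F e‖ ≤ δ(F, E) ‖e‖`, so `δ(E, F) ≤ δ(F, E) < 1`,
and the same argument with the roles exchanged gives equality.
-/

open Module

namespace Submodule

variable {𝕜 V : Type*} [RCLike 𝕜] [NormedAddCommGroup V] [InnerProductSpace 𝕜 V]

/-- `δ(U, W)`, the supremum over unit vectors `u ∈ U` of the distance from `u` to `W`. -/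
noncomputable def directedGap (U W : Submodule 𝕜 V) [U.HasOrthogonalProjection]
    [W.HasOrthogonalProjection] : ℝ :=
  ‖(1 - W.starProjection) ∘L U.starProjection‖

variable {U W : Submodule 𝕜 V} [U.HasOrthogonalProjection] [W.HasOrthogonalProjection]

lemma directedGap_nonneg : 0 ≤ directedGap U W := norm_nonneg _

lemma norm_sub_starProjection_le_directedGap_mul {u : V} (hu : u ∈ U) :
    ‖u - W.starProjection u‖ ≤ directedGap U W * ‖u‖ := by
  have := ((1 - W.starProjection) ∘L U.starProjection).le_opNorm u
  rwa [ContinuousLinearMap.comp_apply, starProjection_eq_self_iff.mpr hu, sub_apply,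
    one_apply_eq_self] at this

lemma directedGap_le_of_forall {c : ℝ} (hc : 0 ≤ c)
    (h : ∀ u ∈ U, ‖u - W.starProjection u‖ ≤ c * ‖u‖) : directedGap U W ≤ c := by
  refine ContinuousLinearMap.opNorm_le_bound _ hc fun v => ?_
  calc ‖U.starProjection v - W.starProjection (U.starProjection v)‖
      ≤ c * ‖U.starProjection v‖ := h _ (U.starProjection_apply_mem v)
    _ ≤ c * ‖v‖ := by gcongr; exact U.norm_starProjection_apply_le v

lemma eq_zero_of_starProjection_eq_zero_of_directedGap_lt_one (h : directedGap W U < 1)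
    {f : V} (hf : f ∈ W) (hUf : U.starProjection f = 0) : f = 0 := by
  have hle := norm_sub_starProjection_le_directedGap_mul (W := U) hf
  rw [hUf, sub_zero] at hle
  exact norm_le_zero_iff.mp <| by nlinarith [norm_nonneg f]

open RCLike in
lemma sq_norm_starProjection_le {f : V} (hf : f ∈ W) :
    ‖U.starProjection f‖ ^ 2 ≤ ‖W.starProjection (U.starProjection f)‖ * ‖f‖ := by
  calc ‖U.starProjection f‖ ^ 2 = re (inner 𝕜 (U.starProjection f) f) :=
        (U.re_inner_starProjection_eq_normSq f).symm
    _ = re (inner 𝕜 (W.starProjection (U.starProjection f)) f) := by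
        rw [W.inner_starProjection_left_eq_right, starProjection_eq_self_iff.mpr hf]
    _ ≤ _ := re_inner_le_norm _ _

lemma norm_sq_eq_norm_sq_starProjection_add (v : V) :
    ‖v‖ ^ 2 = ‖U.starProjection v‖ ^ 2 + ‖v - U.starProjection v‖ ^ 2 := by
  simpa using U.norm_sq_eq_add_norm_sq_starProjection v

lemma norm_sub_starProjection_starProjection_le {f : V} (hf : f ∈ W) :
    ‖U.starProjection f - W.starProjection (U.starProjection f)‖
      ≤ directedGap W U * ‖U.starProjection f‖ := by
  set δ := directedGap W U
  set e := U.starProjection f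
  set p := W.starProjection e
  rcases (norm_nonneg f).eq_or_lt with hf0 | hf0
  · have : f = 0 := norm_eq_zero.mp hf0.symm
    simp [e, p, this]
  have hcs : ‖e‖ ^ 2 ≤ ‖p‖ * ‖f‖ := sq_norm_starProjection_le hf
  have hf_split : ‖f‖ ^ 2 = ‖e‖ ^ 2 + ‖f - e‖ ^ 2 := norm_sq_eq_norm_sq_starProjection_add f
  have he_split : ‖e‖ ^ 2 = ‖p‖ ^ 2 + ‖e - p‖ ^ 2 := norm_sq_eq_norm_sq_starProjection_add e
  have hfe : ‖f - e‖ ≤ δ * ‖f‖ := norm_sub_starProjection_le_directedGap_mul hf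
  have hfe_sq : ‖f - e‖ ^ 2 ≤ δ ^ 2 * ‖f‖ ^ 2 := by
    rw [← mul_pow]; exact pow_le_pow_left₀ (norm_nonneg _) hfe 2
  have he : (1 - δ ^ 2) * ‖f‖ ^ 2 ≤ ‖e‖ ^ 2 := by linarith
  have hp : (1 - δ ^ 2) * ‖e‖ ^ 2 ≤ ‖p‖ ^ 2 := by
    have hcs_sq : ‖e‖ ^ 2 * ‖e‖ ^ 2 ≤ ‖p‖ ^ 2 * ‖f‖ ^ 2 := by
      nlinarith [mul_self_le_mul_self (sq_nonneg _) hcs]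
    refine le_of_mul_le_mul_right ?_ (pow_pos hf0 2)
    nlinarith [mul_le_mul_of_nonneg_left he (sq_nonneg ‖e‖)]
  refine le_of_sq_le_sq ?_ (mul_nonneg directedGap_nonneg (norm_nonneg e))
  rw [mul_pow]
  linarith

lemma directedGap_le_directedGap_of_surjOn (h : Set.SurjOn U.starProjection W U) :
    directedGap U W ≤ directedGap W U := by
  refine directedGap_le_of_forall directedGap_nonneg fun e he => ?_
  obtain ⟨f, hf, rfl⟩ := h he
  exact norm_sub_starProjection_starProjection_le hf

lemma surjOn_starProjection_of_directedGap_lt_one [FiniteDimensional 𝕜 U]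
    [FiniteDimensional 𝕜 W] (hdim : finrank 𝕜 U = finrank 𝕜 W) (h : directedGap W U < 1) :
    Set.SurjOn U.starProjection W U := by
  set P : W →ₗ[𝕜] U := U.orthogonalProjectionOnto.toLinearMap ∘ₗ W.subtype
  have hinj : Function.Injective P := by
    rw [← LinearMap.ker_eq_bot, LinearMap.ker_eq_bot']
    intro f hf
    exact Subtype.ext <| eq_zero_of_starProjection_eq_zero_of_directedGap_lt_one h f.2 <|
      congrArg Subtype.val hf
  intro e he
  obtain ⟨f, hf⟩ := (LinearMap.injective_iff_surjective_of_finrank_eq_finrank hdim.symm).mp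
    hinj ⟨e, he⟩
  exact ⟨f, f.2, congrArg Subtype.val hf⟩

lemma directedGap_le_directedGap_of_directedGap_lt_one [FiniteDimensional 𝕜 U]
    [FiniteDimensional 𝕜 W] (hdim : finrank 𝕜 U = finrank 𝕜 W) (h : directedGap W U < 1) :
    directedGap U W ≤ directedGap W U :=
  directedGap_le_directedGap_of_surjOn (surjOn_starProjection_of_directedGap_lt_one hdim h)

end Submodule

theorem stmt_16_general {V : Type*} [NormedAddCommGroup V] [InnerProductSpace ℂ V]
    (E F : Submodule ℂ V)
    [FiniteDimensional ℂ E] [FiniteDimensional ℂ F]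
    (hdim : Module.finrank ℂ E = Module.finrank ℂ F)
    (hlt : ‖((1 : V →L[ℂ] V) - E.subtypeL.comp (Submodule.orthogonalProjectionOnto E)).comp
        (F.subtypeL.comp (Submodule.orthogonalProjectionOnto F))‖ < 1) :
    ‖((1 : V →L[ℂ] V) - F.subtypeL.comp (Submodule.orthogonalProjectionOnto F)).comp
        (E.subtypeL.comp (Submodule.orthogonalProjectionOnto E))‖
      = ‖((1 : V →L[ℂ] V) - E.subtypeL.comp (Submodule.orthogonalProjectionOnto E)).comp
        (F.subtypeL.comp (Submodule.orthogonalProjectionOnto F))‖ := by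
  change Submodule.directedGap F E < 1 at hlt
  change Submodule.directedGap E F = Submodule.directedGap F E
  have hEF := Submodule.directedGap_le_directedGap_of_directedGap_lt_one hdim hlt
  exact hEF.antisymm <|
    Submodule.directedGap_le_directedGap_of_directedGap_lt_one hdim.symm (hEF.trans_lt hlt)

/-- For finite-dimensional subspaces `E`, `F` of equal dimension in a Hilbert space, if
`δ(F, E) = ‖(I - Q_E) Q_F‖ < 1` then `δ(E, F) = δ(F, E)`, so the gap equals `δ(F, E)`. -/
theorem stmt_16 {V : Type*} [NormedAddCommGroup V] [InnerProductSpace ℂ V]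
    [CompleteSpace V] (E F : Submodule ℂ V)
    [FiniteDimensional ℂ E] [FiniteDimensional ℂ F]
    (hdim : Module.finrank ℂ E = Module.finrank ℂ F)
    (hlt : ‖((1 : V →L[ℂ] V) - E.subtypeL.comp (Submodule.orthogonalProjectionOnto E)).comp
        (F.subtypeL.comp (Submodule.orthogonalProjectionOnto F))‖ < 1) :
    ‖((1 : V →L[ℂ] V) - F.subtypeL.comp (Submodule.orthogonalProjectionOnto F)).comp
        (E.subtypeL.comp (Submodule.orthogonalProjectionOnto E))‖
      = ‖((1 : V →L[ℂ] V) - E.subtypeL.comp (Submodule.orthogonalProjectionOnto E)).comp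
        (F.subtypeL.comp (Submodule.orthogonalProjectionOnto F))‖ :=
  stmt_16_general E F hdim hlt
end
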